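/- The map f : U(1)×U(1)×U(1)×SU(2)×SU(2) → S(U(1)×U(1)×U(2)×U(2)) given by f(a,b,c,A,B) = diag(a^{-2}, b^{-2}, c^{-1}A, (abc)B) is a surjective group homomorphism whose kernel has order 8 and is isomorphic to Z_2 × Z_2 × Z_2. -/

import Mathlib

noncomputable section

/-- The special unitary group over index type `I`, as a subgroup of the unitary group. -/
def SU (I : Type) [Fintype I] [DecidableEq I] :
    Subgroup (Matrix.unitaryGroup I ℂ) :=
  MonoidHom.ker (Matrix.detMonoidHom.comp (Matrix.unitaryGroup I ℂ).subtype)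

/-- Underlying matrix of an element of `SU I`. -/
def mat {I : Type} [Fintype I] [DecidableEq I] (A : SU I) : Matrix I I ℂ := A.1.1

/-- The domain group `U(1) × U(1) × U(1) × SU(2) × SU(2)`. -/
abbrev G4 := Circle × Circle × Circle × SU (Fin 2) × SU (Fin 2)

/-- The index type for `6×6` matrices, grouped in blocks of sizes `1,1,2,2`. -/
abbrev I4 := Fin 1 ⊕ (Fin 1 ⊕ (Fin 2 ⊕ Fin 2))

/-- The map `f(a,b,c,A,B) = diag(a⁻², b⁻², c⁻¹A, (abc)B)`, at the level of matrices. -/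
def f4 (x : G4) : Matrix I4 I4 ℂ :=
  Matrix.fromBlocks (Matrix.of fun _ _ => ((x.1 : ℂ))⁻¹ ^ 2) 0 0
    (Matrix.fromBlocks (Matrix.of fun _ _ => ((x.2.1 : ℂ))⁻¹ ^ 2) 0 0
      (Matrix.fromBlocks (((x.2.2.1 : ℂ))⁻¹ • mat x.2.2.2.1) 0 0
        (((x.1 : ℂ) * (x.2.1 : ℂ) * (x.2.2.1 : ℂ)) • mat x.2.2.2.2)))

/-- The subgroup `S(U(1)×U(1)×U(2)×U(2))` of `SU(6)`: block diagonal matrices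
`diag(s,t,P₁,P₂)` with `s,t ∈ U(1)`, `P₁,P₂ ∈ U(2)` and `s·t·det P₁·det P₂ = 1`. -/
def SU1U1U2U2 : Set (SU I4) :=
  {A | (mat A).toBlocks₁₂ = 0 ∧ (mat A).toBlocks₂₁ = 0 ∧
    ((mat A).toBlocks₂₂).toBlocks₁₂ = 0 ∧ ((mat A).toBlocks₂₂).toBlocks₂₁ = 0 ∧
    (((mat A).toBlocks₂₂).toBlocks₂₂).toBlocks₁₂ = 0 ∧
    (((mat A).toBlocks₂₂).toBlocks₂₂).toBlocks₂₁ = 0 ∧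
    ‖mat A (Sum.inl 0) (Sum.inl 0)‖ = 1 ∧
    ‖mat A (Sum.inr (Sum.inl 0)) (Sum.inr (Sum.inl 0))‖ = 1 ∧
    (((mat A).toBlocks₂₂).toBlocks₂₂).toBlocks₁₁ ∈ Matrix.unitaryGroup (Fin 2) ℂ ∧
    (((mat A).toBlocks₂₂).toBlocks₂₂).toBlocks₂₂ ∈ Matrix.unitaryGroup (Fin 2) ℂ ∧
    mat A (Sum.inl 0) (Sum.inl 0) * mat A (Sum.inr (Sum.inl 0)) (Sum.inr (Sum.inl 0)) *
      ((((mat A).toBlocks₂₂).toBlocks₂₂).toBlocks₁₁).det *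
      ((((mat A).toBlocks₂₂).toBlocks₂₂).toBlocks₂₂).det = 1}

/-!
Each block of `f` is multiplicative and unitary, and the determinants multiply to
`a⁻² b⁻² c⁻² (abc)² = 1`, so `f` is a homomorphism into `S(U(1)×U(1)×U(2)×U(2))`.
Given `diag(s, t, P₁, P₂)` there, pick square roots `a² = s⁻¹`, `b² = t⁻¹`, `c² = (det P₁)⁻¹`
in `U(1)`; then `c P₁ ∈ SU(2)`, and `s t det P₁ det P₂ = 1` says exactly that `(abc)⁻¹ P₂ ∈ SU(2)`.
The kernel consists of the `(a, b, c, c I, (abc)⁻¹ I)` with `a² = b² = 1`, and `det (c I) = 1`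
forces `c² = 1`: it is the image of the injective homomorphism
`(±1)³ → G, (u, v, w) ↦ (u, v, w, w I, (uvw)⁻¹ I)`.
-/

open Matrix

lemma Complex.mem_unitary_of_norm_eq_one {z : ℂ} (hz : ‖z‖ = 1) : z ∈ unitary ℂ := by
  rw [Unitary.mem_iff_star_mul_self, RCLike.star_def, Complex.conj_mul', hz]
  norm_num

lemma exists_circle_sq_eq {z : ℂ} (hz : ‖z‖ = 1) : ∃ w : Circle, (w : ℂ) ^ 2 = z := by
  obtain ⟨w, hw⟩ := IsAlgClosed.exists_pow_nat_eq z two_pos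
  have hw₁ : ‖w‖ = 1 := by
    rwa [← pow_eq_one_iff_of_nonneg (norm_nonneg w) two_ne_zero, ← norm_pow, hw]
  exact ⟨⟨w, mem_sphere_zero_iff_norm.2 hw₁⟩, hw⟩

lemma Matrix.norm_det_of_mem_unitaryGroup {n : Type*} [Fintype n] [DecidableEq n] {M : Matrix n n ℂ}
    (hM : M ∈ unitaryGroup n ℂ) : ‖M.det‖ = 1 :=
  CStarRing.norm_of_mem_unitary (det_of_mem_unitary hM)

lemma Matrix.smul_mem_unitaryGroup {n : Type*} [Fintype n] [DecidableEq n] {z : ℂ}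
    (hz : ‖z‖ = 1) {M : Matrix n n ℂ} (hM : M ∈ unitaryGroup n ℂ) : z • M ∈ unitaryGroup n ℂ :=
  Unitary.smul_mem_of_mem (Complex.mem_unitary_of_norm_eq_one hz) hM

lemma Matrix.fromBlocks_zero_mem_unitaryGroup {m n : Type*} [Fintype m] [DecidableEq m]
    [Fintype n] [DecidableEq n] {A : Matrix m m ℂ} {D : Matrix n n ℂ}
    (hA : A ∈ unitaryGroup m ℂ) (hD : D ∈ unitaryGroup n ℂ) :
    fromBlocks A 0 0 D ∈ unitaryGroup (m ⊕ n) ℂ := by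
  rw [mem_unitaryGroup_iff', star_eq_conjTranspose, fromBlocks_conjTranspose,
    fromBlocks_multiply, ← star_eq_conjTranspose, ← star_eq_conjTranspose,
    (mem_unitaryGroup_iff').1 hA, (mem_unitaryGroup_iff').1 hD]
  simp

lemma Matrix.fromBlocks_zero_eq_one_iff {m n R : Type*} [DecidableEq m] [DecidableEq n]
    [Zero R] [One R] {A : Matrix m m R} {D : Matrix n n R} :
    fromBlocks A 0 0 D = 1 ↔ A = 1 ∧ D = 1 := by
  rw [← fromBlocks_one, fromBlocks_inj]
  simp

lemma Matrix.eq_fromBlocks_zero {l m R : Type*} [Zero R] (M : Matrix (l ⊕ m) (l ⊕ m) R)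
    (h₁₂ : M.toBlocks₁₂ = 0) (h₂₁ : M.toBlocks₂₁ = 0) :
    M = fromBlocks M.toBlocks₁₁ 0 0 M.toBlocks₂₂ := by
  rw [← h₁₂, ← h₂₁, fromBlocks_toBlocks]

section Unique

variable {n R : Type*} [Unique n]

lemma Matrix.eq_of_const (M : Matrix n n R) : M = of fun _ _ => M default default := by
  ext i j
  rw [Subsingleton.elim i default, Subsingleton.elim j default, of_apply]

lemma Matrix.of_const_eq_one_iff [DecidableEq n] [Zero R] [One R] {k : R} :
    (of fun _ _ => k : Matrix n n R) = 1 ↔ k = 1 := by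
  rw [← Matrix.ext_iff]
  simp [Unique.forall_iff, one_apply]

lemma Matrix.of_const_mul_of_const [Fintype n] [Mul R] [AddCommMonoid R] (k l : R) :
    (of fun _ _ => k : Matrix n n R) * (of fun _ _ => l) = of fun _ _ => k * l := by
  ext i j
  simp [mul_apply]

lemma Matrix.det_of_const [Fintype n] [DecidableEq n] [CommRing R] (k : R) :
    (of fun _ _ => k : Matrix n n R).det = k := by
  simp [det_unique]

lemma Matrix.of_const_eq_smul_one [DecidableEq n] [MulZeroOneClass R] (k : R) :
    (of fun _ _ => k : Matrix n n R) = k • 1 := by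
  ext i j
  simp [Subsingleton.elim i j]

lemma Matrix.of_const_mem_unitaryGroup [Fintype n] [DecidableEq n] {z : ℂ} (hz : ‖z‖ = 1) :
    (of fun _ _ => z : Matrix n n ℂ) ∈ unitaryGroup n ℂ := by
  simpa only [of_const_eq_smul_one] using smul_mem_unitaryGroup hz (one_mem _)

end Unique

section SU

variable {n : Type} [Fintype n] [DecidableEq n]

def SU.mk' (M : Matrix n n ℂ) (hM : M ∈ unitaryGroup n ℂ) (hdet : M.det = 1) : SU n :=
  ⟨⟨M, hM⟩, hdet⟩

@[simp] lemma mat_mk' (M : Matrix n n ℂ) (hM : M ∈ unitaryGroup n ℂ) (hdet : M.det = 1) :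
    mat (SU.mk' M hM hdet) = M := rfl

@[simp] lemma mat_one : mat (1 : SU n) = 1 := rfl

@[simp] lemma mat_mul (A B : SU n) : mat (A * B) = mat A * mat B := rfl

lemma mat_injective : Function.Injective (mat : SU n → Matrix n n ℂ) :=
  fun _ _ h => Subtype.ext (Subtype.ext h)

lemma mat_mem_unitaryGroup (A : SU n) : mat A ∈ unitaryGroup n ℂ := A.1.2

lemma det_mat (A : SU n) : (mat A).det = 1 := A.2

end SU

def Circle.signHom : ℤˣ →* Circle where
  toFun u := ⟨((u : ℤ) : ℂ),
    mem_sphere_zero_iff_norm.2 (by rcases Int.units_eq_one_or u with rfl | rfl <;> simp)⟩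
  map_one' := Circle.ext (by simp)
  map_mul' u v := Circle.ext (by simp only [Units.val_mul, Int.cast_mul]; rfl)

@[simp] lemma Circle.coe_signHom (u : ℤˣ) : (Circle.signHom u : ℂ) = ((u : ℤ) : ℂ) := rfl

lemma Circle.signHom_injective : Function.Injective Circle.signHom := by
  intro u v h
  have h' : ((u : ℤ) : ℂ) = ((v : ℤ) : ℂ) := congrArg Subtype.val h
  exact Units.ext (by exact_mod_cast h')

lemma Circle.exists_signHom_eq {z : Circle} (hz : z ^ 2 = 1) : ∃ u, Circle.signHom u = z := by
  have hz' : (z : ℂ) * z = 1 := by rw [← pow_two, ← Circle.coe_pow, hz, Circle.coe_one]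
  rcases mul_self_eq_one_iff.1 hz' with h | h
  · exact ⟨1, Circle.ext (by simp [h])⟩
  · exact ⟨-1, Circle.ext (by simp [h])⟩

lemma Circle.signHom_sq (u : ℤˣ) : Circle.signHom u ^ 2 = 1 := by
  rw [← map_pow, Int.units_sq, map_one]

def SU.signScalar {n : Type} [Fintype n] [DecidableEq n] (hn : Even (Fintype.card n)) :
    ℤˣ →* SU n where
  toFun u := SU.mk' ((Circle.signHom u : ℂ) • 1)
    (smul_mem_unitaryGroup (Circle.norm_coe _) (one_mem _))
    (by
      obtain ⟨k, hk⟩ := hn.two_dvd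
      rw [det_smul, det_one, mul_one, ← Circle.coe_pow, hk, pow_mul, Circle.signHom_sq,
        one_pow, Circle.coe_one])
  map_one' := mat_injective (by simp)
  map_mul' u v := mat_injective (by simp [smul_smul, mul_comm])

@[simp] lemma mat_signScalar {n : Type} [Fintype n] [DecidableEq n] (hn : Even (Fintype.card n))
    (u : ℤˣ) : mat (SU.signScalar hn u) = (Circle.signHom u : ℂ) • 1 := rfl

lemma f4_mul (x y : G4) : f4 (x * y) = f4 x * f4 y := by
  simp only [f4, fromBlocks_multiply, Matrix.mul_zero, Matrix.zero_mul, add_zero, zero_add,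
    of_const_mul_of_const, smul_mul_smul, mat_mul, Prod.fst_mul, Prod.snd_mul, Circle.coe_mul,
    mul_inv, mul_pow, fromBlocks_inj, true_and]
  congr 1
  ring

lemma f4_mem_unitaryGroup (x : G4) : f4 x ∈ unitaryGroup I4 ℂ := by
  refine fromBlocks_zero_mem_unitaryGroup (of_const_mem_unitaryGroup (by simp [Circle.norm_coe])) <|
    fromBlocks_zero_mem_unitaryGroup (of_const_mem_unitaryGroup (by simp [Circle.norm_coe])) <|
      fromBlocks_zero_mem_unitaryGroup ?_ ?_ <;>
    exact smul_mem_unitaryGroup (by simp [Circle.norm_coe]) (mat_mem_unitaryGroup _)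

lemma det_f4 (x : G4) : (f4 x).det = 1 := by
  simp only [f4, det_fromBlocks_zero₂₁, det_of_const, det_smul, det_mat, Fintype.card_fin]
  field_simp

lemma f4_eq_one_iff (x : G4) :
    f4 x = 1 ↔ x.1 ^ 2 = 1 ∧ x.2.1 ^ 2 = 1 ∧ mat x.2.2.2.1 = (x.2.2.1 : ℂ) • 1 ∧
      mat x.2.2.2.2 = ((x.1 : ℂ) * x.2.1 * x.2.2.1)⁻¹ • 1 := by
  simp only [f4, fromBlocks_zero_eq_one_iff, of_const_eq_one_iff,
    inv_smul_eq_iff₀ (Circle.coe_ne_zero _), inv_pow, inv_eq_one, ← Circle.coe_pow,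
    Circle.coe_eq_one]
  rw [eq_inv_smul_iff₀ (by simp)]

def f4Hom : G4 →* SU I4 where
  toFun x := SU.mk' (f4 x) (f4_mem_unitaryGroup x) (det_f4 x)
  map_one' := mat_injective (by simp [f4, fromBlocks_zero_eq_one_iff, of_const_eq_one_iff])
  map_mul' x y := mat_injective (f4_mul x y)

@[simp] lemma mat_f4Hom (x : G4) : mat (f4Hom x) = f4 x := rfl

lemma f4Hom_mem_SU1U1U2U2 (x : G4) : f4Hom x ∈ SU1U1U2U2 := by
  simp only [SU1U1U2U2, Set.mem_ofPred_eq, mat_f4Hom, f4, toBlocks_fromBlocks₁₁,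
    toBlocks_fromBlocks₁₂, toBlocks_fromBlocks₂₁, toBlocks_fromBlocks₂₂, fromBlocks_apply₁₁,
    fromBlocks_apply₂₂, of_apply, true_and]
  refine ⟨by simp [Circle.norm_coe], by simp [Circle.norm_coe],
    smul_mem_unitaryGroup (by simp [Circle.norm_coe]) (mat_mem_unitaryGroup _),
    smul_mem_unitaryGroup (by simp [Circle.norm_coe]) (mat_mem_unitaryGroup _), ?_⟩
  simp only [det_smul, det_mat, Fintype.card_fin]
  field_simp

lemma coe_ker_f4Hom : (f4Hom.ker : Set G4) = {x | f4 x = 1} := by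
  ext x
  rw [SetLike.mem_coe, MonoidHom.mem_ker, ← mat_injective.eq_iff]
  rfl

lemma exists_f4_eq_fromBlocks {s t : ℂ} (hs : ‖s‖ = 1) (ht : ‖t‖ = 1)
    {P₁ P₂ : Matrix (Fin 2) (Fin 2) ℂ} (hP₁ : P₁ ∈ unitaryGroup (Fin 2) ℂ)
    (hP₂ : P₂ ∈ unitaryGroup (Fin 2) ℂ) (hdet : s * t * P₁.det * P₂.det = 1) :
    ∃ x : G4, f4 x = fromBlocks (of fun _ _ => s) 0 0
      (fromBlocks (of fun _ _ => t) 0 0 (fromBlocks P₁ 0 0 P₂)) := by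
  have hP₁det := norm_det_of_mem_unitaryGroup hP₁
  have hP₁ne : P₁.det ≠ 0 := norm_ne_zero_iff.1 (by simp [hP₁det])
  have hP₂ne : P₂.det ≠ 0 := norm_ne_zero_iff.1 (by simp [norm_det_of_mem_unitaryGroup hP₂])
  obtain ⟨a, ha⟩ := exists_circle_sq_eq (z := s⁻¹) (by simp [hs])
  obtain ⟨b, hb⟩ := exists_circle_sq_eq (z := t⁻¹) (by simp [ht])
  obtain ⟨c, hc⟩ := exists_circle_sq_eq (z := P₁.det⁻¹) (by simp [hP₁det])
  have habc : ((a : ℂ) * b * c) ^ 2 = P₂.det := by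
    rw [mul_pow, mul_pow, ha, hb, hc, ← mul_inv, ← mul_inv]
    exact inv_eq_of_mul_eq_one_right hdet
  refine ⟨(a, b, c, SU.mk' ((c : ℂ) • P₁) (smul_mem_unitaryGroup c.norm_coe hP₁) ?_,
    SU.mk' (((a : ℂ) * b * c)⁻¹ • P₂)
      (smul_mem_unitaryGroup (by simp [Circle.norm_coe]) hP₂) ?_), ?_⟩
  · rw [det_smul, Fintype.card_fin, hc, inv_mul_cancel₀ hP₁ne]
  · rw [det_smul, Fintype.card_fin, inv_pow, habc, inv_mul_cancel₀ hP₂ne]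
  · simp only [f4, mat_mk', inv_pow, ha, hb, inv_inv, inv_smul_smul₀ c.coe_ne_zero,
      smul_inv_smul₀ (by simp : (a : ℂ) * b * c ≠ 0)]

lemma exists_f4_eq_mat {A : SU I4} (hA : A ∈ SU1U1U2U2) : ∃ x, f4 x = mat A := by
  obtain ⟨h₁₂, h₂₁, h₂₂₁₂, h₂₂₂₁, h₂₂₂₂₁₂, h₂₂₂₂₂₁, hs, ht, hP₁, hP₂, hdet⟩ := hA
  obtain ⟨x, hx⟩ := exists_f4_eq_fromBlocks hs ht hP₁ hP₂ hdet
  refine ⟨x, hx.trans ?_⟩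
  conv_rhs => rw [eq_fromBlocks_zero _ h₁₂ h₂₁, eq_fromBlocks_zero _ h₂₂₁₂ h₂₂₂₁,
    eq_fromBlocks_zero _ h₂₂₂₂₁₂ h₂₂₂₂₂₁, eq_of_const (mat A).toBlocks₁₁,
    eq_of_const (mat A).toBlocks₂₂.toBlocks₁₁]
  rfl

def f4KernelEmbedding : ℤˣ × ℤˣ × ℤˣ →* G4 where
  toFun u := (Circle.signHom u.1, Circle.signHom u.2.1, Circle.signHom u.2.2,
    SU.signScalar (by simp) u.2.2, SU.signScalar (by simp) (u.1 * u.2.1 * u.2.2)⁻¹)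
  map_one' := by simp
  map_mul' u v := by
    refine Prod.ext (map_mul _ _ _) <| Prod.ext (map_mul _ _ _) <| Prod.ext (map_mul _ _ _) <|
      Prod.ext (map_mul _ _ _) ?_
    dsimp only [Prod.snd_mul, Prod.fst_mul]
    rw [← map_mul, ← mul_inv]
    congr 2
    ac_rfl

lemma f4KernelEmbedding_apply (u v w : ℤˣ) :
    f4KernelEmbedding (u, v, w) = (Circle.signHom u, Circle.signHom v, Circle.signHom w,
      SU.signScalar (by simp) w, SU.signScalar (by simp) (u * v * w)⁻¹) := rfl

lemma f4KernelEmbedding_injective : Function.Injective f4KernelEmbedding := by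
  rintro ⟨u₁, u₂, u₃⟩ ⟨v₁, v₂, v₃⟩ h
  simp only [f4KernelEmbedding_apply, Prod.mk.injEq] at h
  obtain ⟨h₁, h₂, h₃, -⟩ := h
  rw [Circle.signHom_injective h₁, Circle.signHom_injective h₂, Circle.signHom_injective h₃]

lemma mat_signScalar_mul_inv (u v w : ℤˣ) :
    mat (SU.signScalar (n := Fin 2) (by simp) (u * v * w)⁻¹) =
      ((Circle.signHom u : ℂ) * Circle.signHom v * Circle.signHom w)⁻¹ • 1 := by
  rw [mat_signScalar, map_inv, map_mul, map_mul, Circle.coe_inv, Circle.coe_mul, Circle.coe_mul]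

lemma range_f4KernelEmbedding : f4KernelEmbedding.range = f4Hom.ker := by
  ext x
  rw [MonoidHom.mem_ker, ← mat_injective.eq_iff, mat_f4Hom, mat_one, f4_eq_one_iff]
  constructor
  · rintro ⟨⟨u, v, w⟩, rfl⟩
    exact ⟨Circle.signHom_sq u, Circle.signHom_sq v, rfl, mat_signScalar_mul_inv u v w⟩
  · obtain ⟨a, b, c, A, B⟩ := x
    rintro ⟨ha, hb, hA, hB⟩
    have hc : c ^ 2 = 1 := by
      have h := det_mat A
      rw [hA, det_smul, det_one, mul_one, Fintype.card_fin, ← Circle.coe_pow,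
        Circle.coe_eq_one] at h
      exact h
    obtain ⟨u, rfl⟩ := Circle.exists_signHom_eq ha
    obtain ⟨v, rfl⟩ := Circle.exists_signHom_eq hb
    obtain ⟨w, rfl⟩ := Circle.exists_signHom_eq hc
    refine ⟨(u, v, w), ?_⟩
    rw [f4KernelEmbedding_apply]
    congr
    · exact mat_injective hA.symm
    · exact mat_injective ((mat_signScalar_mul_inv u v w).trans hB.symm)

def Int.unitsMulEquivZModTwo : ℤˣ ≃* Multiplicative (ZMod 2) :=
  mulEquivOfPrimeCardEq (p := 2) (by simp) (by simp)

def kerF4HomMulEquiv :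
    f4Hom.ker ≃* Multiplicative (ZMod 2) × Multiplicative (ZMod 2) × Multiplicative (ZMod 2) :=
  ((MonoidHom.ofInjective f4KernelEmbedding_injective).trans
    (MulEquiv.subgroupCongr range_f4KernelEmbedding)).symm.trans
    (Int.unitsMulEquivZModTwo.prodCongr
      (Int.unitsMulEquivZModTwo.prodCongr Int.unitsMulEquivZModTwo))

/-- `f(a,b,c,A,B) = diag(a⁻², b⁻², c⁻¹A, (abc)B)` is a surjective group homomorphism from
`U(1)×U(1)×U(1)×SU(2)×SU(2)` onto `S(U(1)×U(1)×U(2)×U(2))` whose kernel has order `8`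
and is isomorphic to `ℤ₂ × ℤ₂ × ℤ₂`. -/
theorem f4_surjective_hom_kernel_z2z2z2 :
    -- `f` is a group homomorphism
    (∀ x y : G4, f4 (x * y) = f4 x * f4 y) ∧
    -- `f` takes values in `S(U(1)×U(1)×U(2)×U(2))`
    (∀ x, ∃ A : SU I4, A ∈ SU1U1U2U2 ∧ mat A = f4 x) ∧
    -- `f` is surjective onto `S(U(1)×U(1)×U(2)×U(2))`
    (∀ A ∈ SU1U1U2U2, ∃ x, f4 x = mat A) ∧
    -- the kernel has order `8` and is isomorphic to `ℤ₂ × ℤ₂ × ℤ₂`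
    (∀ K : Subgroup G4, (K : Set G4) = {x | f4 x = 1} →
      Nat.card K = 8 ∧
      Nonempty (K ≃* Multiplicative (ZMod 2) × Multiplicative (ZMod 2) ×
        Multiplicative (ZMod 2))) := by
  refine ⟨f4_mul, fun x => ⟨f4Hom x, f4Hom_mem_SU1U1U2U2 x, rfl⟩, fun A hA => exists_f4_eq_mat hA,
    fun K hK => ?_⟩
  obtain rfl : K = f4Hom.ker := SetLike.coe_injective (hK.trans coe_ker_f4Hom.symm)
  refine ⟨?_, ⟨kerF4HomMulEquiv⟩⟩
  rw [Nat.card_congr kerF4HomMulEquiv.toEquiv]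
  simp
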